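/- arXiv:1907.04242 — 2 statements merged into one kernel-verified Lean document; each statement's English description precedes it below -/
import Mathlib

section
/- For three binary random variables, the maximum value I3(X1;X2;X3) = 1 bit is attained if and only if each Xi is unbiased (H(Xi)=1) and each variable is a deterministic function of each other, i.e. X1 = X2 or X1 = 1 - X2, and X1 = X3 or X1 = 1 - X3 almost surely; equivalently, the joint law is one of the four laws p000=p111=1/2, p001=p110=1/2, p010=p101=1/2, or p011=p100=1/2. -/
open Finset

noncomputable def negMulLog2 (x : ℝ) : ℝ := -(x * Real.logb 2 x)

noncomputable def prob {Ω α : Type*} [Fintype Ω] [DecidableEq α]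
    (p : Ω → ℝ) (X : Ω → α) (x : α) : ℝ :=
  ∑ ω : Ω, if X ω = x then p ω else 0

noncomputable def ent {Ω α : Type*} [Fintype Ω] [Fintype α] [DecidableEq α]
    (p : Ω → ℝ) (X : Ω → α) : ℝ :=
  ∑ x : α, negMulLog2 (prob p X x)

noncomputable def condp {Ω γ : Type*} [Fintype Ω] [DecidableEq γ]
    (p : Ω → ℝ) (Z : Ω → γ) (z : γ) : Ω → ℝ :=
  fun ω => if Z ω = z then p ω / prob p Z z else 0

noncomputable def I2 {Ω α β : Type*} [Fintype Ω] [Fintype α] [DecidableEq α]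
    [Fintype β] [DecidableEq β]
    (p : Ω → ℝ) (X : Ω → α) (Y : Ω → β) : ℝ :=
  ent p X + ent p Y - ent p (fun ω => (X ω, Y ω))

noncomputable def condI2 {Ω α β γ : Type*} [Fintype Ω] [Fintype α] [DecidableEq α]
    [Fintype β] [DecidableEq β] [Fintype γ] [DecidableEq γ]
    (p : Ω → ℝ) (X : Ω → α) (Y : Ω → β) (Z : Ω → γ) : ℝ :=
  ∑ z : γ, prob p Z z * I2 (condp p Z z) X Y

noncomputable def I3 {Ω α β γ : Type*} [Fintype Ω] [Fintype α] [DecidableEq α]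
    [Fintype β] [DecidableEq β] [Fintype γ] [DecidableEq γ]
    (p : Ω → ℝ) (X : Ω → α) (Y : Ω → β) (Z : Ω → γ) : ℝ :=
  ent p X + ent p Y + ent p Z
    - ent p (fun ω => (X ω, Y ω)) - ent p (fun ω => (X ω, Z ω))
    - ent p (fun ω => (Y ω, Z ω))
    + ent p (fun ω => (X ω, Y ω, Z ω))

/-
Shannon's inequalities give `I3 ≤ I(X₁;X₂) ≤ H(X₁) ≤ 1`: the first is strong subadditivity
`H(X₁,X₂,X₃) + H(X₃) ≤ H(X₁,X₃) + H(X₂,X₃)`, the second is `H(X₂) ≤ H(X₁,X₂)`, the last bounds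
a binary entropy. Swapping `X₂` and `X₃`, also `I3 ≤ I(X₁;X₃) ≤ H(X₃) ≤ 1`. So `I3 = 1` forces
`X₁` and `X₃` to be unbiased, `H(X₂) = H(X₁,X₂)` and `H(X₁) = H(X₁,X₃)`. As `-x log x` is
strictly subadditive, `H(f ∘ X) = H(X)` only when `X` is a.s. determined by `f ∘ X`; so `X₁` is
a function of `X₂` and `X₃` one of `X₁`, and unbiasedness leaves only the four laws.
-/

open Real

lemma negMulLog2_eq_negMulLog_div (x : ℝ) : negMulLog2 x = negMulLog x / log 2 := by
  simp only [negMulLog2, negMulLog, logb]; ring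

lemma mul_log_le_mul_log {x y : ℝ} (hx : 0 ≤ x) (hxy : x ≤ y) : x * log x ≤ x * log y := by
  rcases hx.eq_or_lt with rfl | hx
  · simp
  · exact mul_le_mul_of_nonneg_left (log_le_log hx hxy) hx.le

lemma negMulLog_sum_le {ι : Type*} (s : Finset ι) {x : ι → ℝ} (hx : ∀ i ∈ s, 0 ≤ x i) :
    negMulLog (∑ i ∈ s, x i) ≤ ∑ i ∈ s, negMulLog (x i) := by
  rw [negMulLog, neg_mul, sum_mul, ← sum_neg_distrib]
  refine sum_le_sum fun i hi => ?_
  rw [negMulLog, neg_mul, neg_le_neg_iff]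
  exact mul_log_le_mul_log (hx i hi) (single_le_sum hx hi)

lemma negMulLog_sum_lt {ι : Type*} {s : Finset ι} {x : ι → ℝ} (hx : ∀ i ∈ s, 0 ≤ x i)
    {i j : ι} (hi : i ∈ s) (hj : j ∈ s) (hij : i ≠ j) (hxi : 0 < x i) (hxj : 0 < x j) :
    negMulLog (∑ k ∈ s, x k) < ∑ k ∈ s, negMulLog (x k) := by
  classical
  rw [negMulLog, neg_mul, sum_mul, ← sum_neg_distrib]
  refine sum_lt_sum (fun k hk => ?_) ⟨i, hi, ?_⟩
  · rw [negMulLog, neg_mul, neg_le_neg_iff]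
    exact mul_log_le_mul_log (hx k hk) (single_le_sum hx hk)
  · have hpair : x i + x j ≤ ∑ k ∈ s, x k := by
      rw [← sum_pair hij]
      exact sum_le_sum_of_subset_of_nonneg (by simp [insert_subset_iff, hi, hj])
        fun k hk _ => hx k hk
    rw [negMulLog, neg_mul, neg_lt_neg_iff]
    exact mul_lt_mul_of_pos_left (log_lt_log hxi (by linarith)) hxi

-- Gibbs' inequality for one cell of mass `t` against the product-of-margins mass `a * b / s`.
lemma sub_mul_div_le_mul_log {t a b s : ℝ} (ht : 0 ≤ t) (hta : t ≤ a) (htb : t ≤ b) (hts : t ≤ s) :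
    t - a * b / s ≤ t * log t + t * log s - t * log a - t * log b := by
  rcases ht.eq_or_lt with rfl | ht
  · have : 0 ≤ a * b / s := by positivity
    simpa using this
  · have ha : 0 < a := ht.trans_le hta
    have hb : 0 < b := ht.trans_le htb
    have hs : 0 < s := ht.trans_le hts
    have hq : 0 < a * b / (t * s) := by positivity
    have hlog : log (a * b / (t * s)) = log a + log b - log t - log s := by
      rw [log_div (by positivity) (by positivity), log_mul (by positivity) (by positivity),
        log_mul (by positivity) (by positivity)]
      ring
    have := mul_le_mul_of_nonneg_left (log_le_sub_one_of_pos hq) ht.le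
    have hcancel : t * (a * b / (t * s) - 1) = a * b / s - t := by field_simp
    rw [hlog, hcancel] at this
    linarith

lemma negMulLog_sum_add_sum_negMulLog_le {ι κ : Type*} [Fintype ι] [Fintype κ]
    {t : ι → κ → ℝ} (ht : ∀ i j, 0 ≤ t i j) :
    negMulLog (∑ i, ∑ j, t i j) + ∑ i, ∑ j, negMulLog (t i j) ≤
      ∑ i, negMulLog (∑ j, t i j) + ∑ j, negMulLog (∑ i, t i j) := by
  set a := fun i => ∑ j, t i j
  set b := fun j => ∑ i, t i j
  set s := ∑ i, ∑ j, t i j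
  have hsa : ∑ i, a i = s := rfl
  have hsb : ∑ j, b j = s := sum_comm
  have hcell : ∀ i j, t i j - a i * b j / s ≤
      t i j * log (t i j) + t i j * log s - t i j * log (a i) - t i j * log (b j) := fun i j =>
    sub_mul_div_le_mul_log (ht i j) (single_le_sum (fun k _ => ht i k) (mem_univ j))
      (single_le_sum (fun k _ => ht k j) (mem_univ i))
      ((single_le_sum (fun k _ => ht i k) (mem_univ j)).trans
        (single_le_sum (fun k _ => sum_nonneg fun l _ => ht k l) (mem_univ i)))
  have hmass : ∑ i, ∑ j, a i * b j / s = s := by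
    simp_rw [mul_div_assoc, ← mul_sum, ← sum_div, hsb, ← sum_mul, hsa, ← mul_div_assoc,
      mul_self_div_self]
  have hlog_s : ∑ i, ∑ j, t i j * log s = s * log s := by simp_rw [← sum_mul]; rfl
  have hlog_a : ∑ i, ∑ j, t i j * log (a i) = ∑ i, a i * log (a i) := by simp_rw [← sum_mul]; rfl
  have hlog_b : ∑ i, ∑ j, t i j * log (b j) = ∑ j, b j * log (b j) := by
    rw [sum_comm]; simp_rw [← sum_mul]; rfl
  have hsum := sum_le_sum fun i (_ : i ∈ univ) => sum_le_sum fun j (_ : j ∈ univ) => hcell i j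
  simp only [sum_sub_distrib, sum_add_distrib, hlog_s, hlog_a, hlog_b, hmass] at hsum
  simp only [negMulLog, neg_mul, sum_neg_distrib]
  linarith

section Entropy

variable {Ω α β γ : Type*} [Fintype Ω] [DecidableEq α] [DecidableEq β] [DecidableEq γ]
  {p : Ω → ℝ}

lemma prob_nonneg (hp : ∀ ω, 0 ≤ p ω) (X : Ω → α) (x : α) : 0 ≤ prob p X x :=
  sum_nonneg fun ω _ => by split_ifs <;> simp [hp]

lemma prob_comp [Fintype α] (f : α → β) (X : Ω → α) (b : β) :
    prob p (fun ω => f (X ω)) b = ∑ a ∈ univ with f a = b, prob p X a := by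
  simp only [prob]
  rw [sum_comm]
  refine sum_congr rfl fun ω _ => ?_
  simp

lemma sum_prob [Fintype α] (X : Ω → α) : ∑ x, prob p X x = ∑ ω, p ω := by
  simp only [prob]
  rw [sum_comm]
  simp

lemma ent_mul_log_two [Fintype α] (p : Ω → ℝ) (X : Ω → α) :
    ent p X * log 2 = ∑ x, negMulLog (prob p X x) := by
  simp only [ent, negMulLog2_eq_negMulLog_div, ← sum_div]
  exact div_mul_cancel₀ _ (log_pos one_lt_two).ne'

lemma ent_comp_le [Fintype α] [Fintype β] (hp : ∀ ω, 0 ≤ p ω) (f : α → β) (X : Ω → α) :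
    ent p (fun ω => f (X ω)) ≤ ent p X := by
  rw [← mul_le_mul_iff_of_pos_right (log_pos one_lt_two), ent_mul_log_two, ent_mul_log_two,
    ← sum_fiberwise univ f]
  simp only [prob_comp]
  exact sum_le_sum fun b _ => negMulLog_sum_le _ fun a _ => prob_nonneg hp X a

lemma ent_comp_lt [Fintype α] [Fintype β] (hp : ∀ ω, 0 ≤ p ω) (f : α → β) (X : Ω → α)
    {a a' : α} (hne : a ≠ a') (hf : f a = f a') (ha : 0 < prob p X a) (ha' : 0 < prob p X a') :
    ent p (fun ω => f (X ω)) < ent p X := by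
  rw [← mul_lt_mul_iff_of_pos_right (log_pos one_lt_two), ent_mul_log_two, ent_mul_log_two,
    ← sum_fiberwise univ f]
  simp only [prob_comp]
  refine sum_lt_sum (fun b _ => negMulLog_sum_le _ fun a _ => prob_nonneg hp X a)
    ⟨f a, mem_univ _, negMulLog_sum_lt (fun a _ => prob_nonneg hp X a) ?_ ?_ hne ha ha'⟩ <;>
    simp [hf]

lemma prob_eq_zero_or_of_ent_comp_eq [Fintype α] [Fintype β] (hp : ∀ ω, 0 ≤ p ω) (f : α → β)
    (X : Ω → α) (h : ent p (fun ω => f (X ω)) = ent p X) {a a' : α} (hne : a ≠ a')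
    (hf : f a = f a') :
    prob p X a = 0 ∨ prob p X a' = 0 := by
  by_contra! hpos
  exact h.not_lt (ent_comp_lt hp f X hne hf ((prob_nonneg hp X a).lt_of_ne' hpos.1)
    ((prob_nonneg hp X a').lt_of_ne' hpos.2))

lemma ent_comp_of_leftInverse [Fintype α] [Fintype β] (hp : ∀ ω, 0 ≤ p ω) {f : α → β}
    {g : β → α} (hgf : Function.LeftInverse g f) (X : Ω → α) :
    ent p (fun ω => f (X ω)) = ent p X :=
  (ent_comp_le hp f X).antisymm <| by simpa only [hgf _] using ent_comp_le hp g fun ω => f (X ω)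

lemma prob_eq_sum_prob_prod [Fintype α] (X : Ω → α) (Y : Ω → β) (y : β) :
    prob p Y y = ∑ x, prob p (fun ω => (X ω, Y ω)) (x, y) := by
  simp only [prob]
  rw [sum_comm]
  refine sum_congr rfl fun ω _ => ?_
  by_cases Y ω = y <;> simp [*]

lemma ent_triple_add_ent_le [Fintype α] [Fintype β] [Fintype γ] (hp : ∀ ω, 0 ≤ p ω)
    (X : Ω → α) (Y : Ω → β) (Z : Ω → γ) :
    ent p (fun ω => (X ω, Y ω, Z ω)) + ent p Z ≤
      ent p (fun ω => (X ω, Z ω)) + ent p (fun ω => (Y ω, Z ω)) := by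
  set r := fun (x : α) (y : β) (z : γ) => prob p (fun ω => (X ω, Y ω, Z ω)) (x, y, z)
  have hXZ : ∀ x z, prob p (fun ω => (X ω, Z ω)) (x, z) = ∑ y, r x y z := fun x z => by
    simp only [r, prob]
    rw [sum_comm]
    refine sum_congr rfl fun ω _ => ?_
    by_cases X ω = x <;> by_cases Z ω = z <;> simp [*]
  have hYZ : ∀ y z, prob p (fun ω => (Y ω, Z ω)) (y, z) = ∑ x, r x y z := fun y z =>
    prob_eq_sum_prob_prod X _ (y, z)
  have hZ : ∀ z, prob p Z z = ∑ x, ∑ y, r x y z := fun z => by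
    rw [prob_eq_sum_prob_prod Y Z, sum_comm]
    simp only [hYZ]
  have hcond := sum_le_sum fun z (_ : z ∈ univ) =>
    negMulLog_sum_add_sum_negMulLog_le (t := fun x y => r x y z) fun x y => prob_nonneg hp _ _
  rw [← mul_le_mul_iff_of_pos_right (log_pos one_lt_two), add_mul, add_mul]
  simp only [ent_mul_log_two, Fintype.sum_prod_type, hXZ, hYZ, hZ]
  have hXYZ : ∑ x, ∑ y, ∑ z, negMulLog (prob p (fun ω => (X ω, Y ω, Z ω)) (x, y, z)) =
      ∑ z, ∑ x, ∑ y, negMulLog (r x y z) := by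
    simp_rw [sum_comm (t := (univ : Finset γ))]
    rw [sum_comm]
  have hXZ' : ∑ x, ∑ z, negMulLog (∑ y, r x y z) = ∑ z, ∑ x, negMulLog (∑ y, r x y z) := sum_comm
  have hYZ' : ∑ y, ∑ z, negMulLog (∑ x, r x y z) = ∑ z, ∑ y, negMulLog (∑ x, r x y z) := sum_comm
  simp only [sum_add_distrib] at hcond
  linarith

lemma I3_le_I2 [Fintype α] [Fintype β] [Fintype γ] (hp : ∀ ω, 0 ≤ p ω)
    (X : Ω → α) (Y : Ω → β) (Z : Ω → γ) : I3 p X Y Z ≤ I2 p X Y := by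
  have := ent_triple_add_ent_le hp X Y Z
  rw [I3, I2]; linarith

lemma I3_swap_right [Fintype α] [Fintype β] [Fintype γ] (hp : ∀ ω, 0 ≤ p ω)
    (X : Ω → α) (Y : Ω → β) (Z : Ω → γ) : I3 p X Z Y = I3 p X Y Z := by
  have hswap : ent p (fun ω => (Z ω, Y ω)) = ent p (fun ω => (Y ω, Z ω)) :=
    ent_comp_of_leftInverse hp (f := Prod.swap) (g := Prod.swap) Prod.swap_swap
      fun ω => (Y ω, Z ω)
  have hswap₃ : ent p (fun ω => (X ω, Z ω, Y ω)) = ent p (fun ω => (X ω, Y ω, Z ω)) :=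
    ent_comp_of_leftInverse hp (f := Prod.map id Prod.swap) (g := Prod.map id Prod.swap)
      (fun _ => rfl) fun ω => (X ω, Y ω, Z ω)
  rw [I3, I3, hswap, hswap₃]; ring

lemma ent_eq_binEntropy_div (hs : ∑ ω, p ω = 1) (X : Ω → Fin 2) :
    ent p X = binEntropy (prob p X 0) / log 2 := by
  have h1 : prob p X 1 = 1 - prob p X 0 := by
    have := sum_prob (p := p) X
    rw [Fin.sum_univ_two, hs] at this
    linarith
  rw [eq_div_iff (log_pos one_lt_two).ne', ent_mul_log_two, Fin.sum_univ_two, h1,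
    binEntropy_eq_negMulLog_add_negMulLog_one_sub]

lemma ent_le_one (hs : ∑ ω, p ω = 1) (X : Ω → Fin 2) : ent p X ≤ 1 := by
  rw [ent_eq_binEntropy_div hs, div_le_one (log_pos one_lt_two)]
  exact binEntropy_le_log_two

lemma prob_zero_eq_half_of_ent_eq_one (hs : ∑ ω, p ω = 1) {X : Ω → Fin 2} (h : ent p X = 1) :
    prob p X 0 = 2⁻¹ := by
  rw [ent_eq_binEntropy_div hs, div_eq_one_iff_eq (log_pos one_lt_two).ne'] at h
  exact binEntropy_eq_log_two.mp h

end Entropy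

lemma negMulLog2_zero : negMulLog2 0 = 0 := by simp [negMulLog2]

lemma negMulLog2_two_inv : negMulLog2 2⁻¹ = 2⁻¹ := by
  simp [negMulLog2, logb_inv]

set_option maxHeartbeats 400000 in
lemma antipodal_law_of_unbiased_of_determined (p : Fin 2 × Fin 2 × Fin 2 → ℝ)
    (hp : ∀ ω, 0 ≤ p ω) (hs : ∑ ω, p ω = 1)
    (h1 : prob p (fun ω => ω.1) 0 = 2⁻¹) (h3 : prob p (fun ω => ω.2.2) 0 = 2⁻¹)
    (h12 : ∀ b, prob p (fun ω => (ω.1, ω.2.1)) (0, b) = 0 ∨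
      prob p (fun ω => (ω.1, ω.2.1)) (1, b) = 0)
    (h13 : ∀ a, prob p (fun ω => (ω.1, ω.2.2)) (a, 0) = 0 ∨
      prob p (fun ω => (ω.1, ω.2.2)) (a, 1) = 0) :
    (p = fun ω => if ω = (0, 0, 0) ∨ ω = (1, 1, 1) then (1 / 2 : ℝ) else 0) ∨
      (p = fun ω => if ω = (0, 0, 1) ∨ ω = (1, 1, 0) then (1 / 2 : ℝ) else 0) ∨
      (p = fun ω => if ω = (0, 1, 0) ∨ ω = (1, 0, 1) then (1 / 2 : ℝ) else 0) ∨
      (p = fun ω => if ω = (0, 1, 1) ∨ ω = (1, 0, 0) then (1 / 2 : ℝ) else 0) := by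
  simp only [prob, Fintype.sum_prod_type, Fin.sum_univ_two, Prod.mk.injEq, Fin.isValue,
    Fin.forall_fin_two, zero_ne_one, one_ne_zero, true_and, false_and, and_true, and_false,
    ↓reduceIte, add_zero, zero_add] at h1 h3 h12 h13 hs
  simp only [Prod.forall, Fin.forall_fin_two] at hp
  obtain ⟨⟨⟨h000, h001⟩, h010, h011⟩, ⟨h100, h101⟩, h110, h111⟩ := hp
  simp only [funext_iff, Prod.forall, Prod.mk.injEq, Fin.forall_fin_two, Fin.isValue, one_div,
    zero_ne_one, one_ne_zero, and_true, and_false, or_false, false_or, ↓reduceIte]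
  obtain ⟨h12₀ | h12₀, h12₁ | h12₁⟩ := h12 <;> obtain ⟨h13₀ | h13₀, h13₁ | h13₁⟩ := h13 <;>
  first
  | exfalso; linarith
  | refine Or.inl ?_; and_intros <;> linarith
  | refine Or.inr (Or.inl ?_); and_intros <;> linarith
  | refine Or.inr (Or.inr (Or.inl ?_)); and_intros <;> linarith
  | refine Or.inr (Or.inr (Or.inr ?_)); and_intros <;> linarith

theorem stmt7 (p : Fin 2 × Fin 2 × Fin 2 → ℝ)
    (hp : ∀ ω, 0 ≤ p ω) (hs : ∑ ω, p ω = 1) :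
    I3 p (fun ω => ω.1) (fun ω => ω.2.1) (fun ω => ω.2.2) = 1 ↔
      (p = fun ω => if ω = (0, 0, 0) ∨ ω = (1, 1, 1) then (1 / 2 : ℝ) else 0) ∨
      (p = fun ω => if ω = (0, 0, 1) ∨ ω = (1, 1, 0) then (1 / 2 : ℝ) else 0) ∨
      (p = fun ω => if ω = (0, 1, 0) ∨ ω = (1, 0, 1) then (1 / 2 : ℝ) else 0) ∨
      (p = fun ω => if ω = (0, 1, 1) ∨ ω = (1, 0, 0) then (1 / 2 : ℝ) else 0) := by
  constructor
  · intro h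
    set X₁ := fun ω : Fin 2 × Fin 2 × Fin 2 => ω.1
    set X₂ := fun ω : Fin 2 × Fin 2 × Fin 2 => ω.2.1
    set X₃ := fun ω : Fin 2 × Fin 2 × Fin 2 => ω.2.2
    have h12 := I3_le_I2 hp X₁ X₂ X₃
    have h13 : I3 p X₁ X₂ X₃ ≤ I2 p X₁ X₃ := I3_swap_right hp X₁ X₂ X₃ ▸ I3_le_I2 hp X₁ X₃ X₂
    have hmono₂ : ent p X₂ ≤ ent p (fun ω => (X₁ ω, X₂ ω)) :=
      ent_comp_le hp Prod.snd fun ω => (X₁ ω, X₂ ω)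
    have hmono₁ : ent p X₁ ≤ ent p (fun ω => (X₁ ω, X₃ ω)) :=
      ent_comp_le hp Prod.fst fun ω => (X₁ ω, X₃ ω)
    have hle₁ := ent_le_one hs X₁
    have hle₃ := ent_le_one hs X₃
    rw [I2] at h12 h13
    have hent₁ : ent p X₁ = 1 := by linarith
    have hent₃ : ent p X₃ = 1 := by linarith
    have hdet₂₁ : ent p X₂ = ent p (fun ω => (X₁ ω, X₂ ω)) := by linarith
    have hdet₁₃ : ent p X₁ = ent p (fun ω => (X₁ ω, X₃ ω)) := by linarith
    exact antipodal_law_of_unbiased_of_determined p hp hs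
      (prob_zero_eq_half_of_ent_eq_one hs hent₁) (prob_zero_eq_half_of_ent_eq_one hs hent₃)
      (fun b => prob_eq_zero_or_of_ent_comp_eq hp Prod.snd (fun ω => (X₁ ω, X₂ ω)) hdet₂₁
        (by simp) rfl)
      (fun a => prob_eq_zero_or_of_ent_comp_eq hp Prod.fst (fun ω => (X₁ ω, X₃ ω)) hdet₁₃
        (by simp) rfl)
  · rintro (rfl | rfl | rfl | rfl) <;>
      simp [I3, ent, prob, Fintype.sum_prod_type, Fin.sum_univ_two, negMulLog2_zero,
        negMulLog2_two_inv] <;> norm_num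
end

section
/- Let Δ be the simplex of probability laws on a finite set of cardinality r^k (probabilities p_1,...,p_{r^k} summing to 1) equipped with the uniform (Lebesgue) measure in affine coordinates. For any ε with 0 < ε ≤ 1/e, the set of probability laws P whose base-2 entropy satisfies H(P) > ε·k·log2(r) has measure greater than 1-ε. -/
/-!
Write `n = r ^ k`. A law all of whose probabilities are `< t` has entropy `> -log t`, since then
`-p log p > p (-log t)` termwise. In affine coordinates the laws with `p_j ≥ t` form a translate
of the simplex scaled by `1 - t`, of relative volume `(1 - t) ^ (n - 1)`, so by the union bound
the laws of entropy `≤ ε log n` have relative volume at most `n (1 - n ^ (-ε)) ^ (n - 1)`. For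
`n ≥ 3` and `ε ≤ 0.37` this is `< ε`: for `n ≤ 11` by the Padé bound `1 - e^(-x) ≤ 2x / (2 + x)`,
for `n ≥ 12` by `1 - y ≤ e^(-y)`. For `n = 2` both probabilities exceed `ε / 3` outside a set of
relative volume `2ε / 3`, and there the binary entropy exceeds `ε log 2`.
-/

open Real MeasureTheory Pointwise

namespace UniformSimplex

theorem ofReal_one_sub_mul_lt_of_subset_union {α : Type*} [MeasurableSpace α] {μ : Measure α}
    {S G B : Set α} {ε : ℝ} (hε : ε ≤ 1) (hS : μ S ≠ ⊤) (hcover : S ⊆ G ∪ B) (hG : G ⊆ S)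
    (hB : μ B < ENNReal.ofReal ε * μ S) : ENNReal.ofReal (1 - ε) * μ S < μ G := by
  have hε0 : 0 < ε := ENNReal.ofReal_pos.1 (pos_of_ne_zero (left_ne_zero_of_mul hB.ne_bot))
  rw [← ENNReal.add_lt_add_iff_right (ENNReal.mul_ne_top ENNReal.ofReal_ne_top hS), ← add_mul,
    ← ENNReal.ofReal_add (sub_nonneg.2 hε) hε0.le, sub_add_cancel, ENNReal.ofReal_one, one_mul]
  calc μ S ≤ μ G + μ B := (measure_mono hcover).trans (measure_union_le _ _)
    _ < μ G + ENNReal.ofReal ε * μ S :=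
      ENNReal.add_lt_add_left (ne_top_of_le_ne_top hS (measure_mono hG)) hB

def solidSimplex (ι : Type*) [Fintype ι] : Set (ι → ℝ) := {q | (∀ i, 0 ≤ q i) ∧ ∑ i, q i ≤ 1}

section SolidSimplex

variable {ι : Type*} [Fintype ι]

theorem setOf_mem_solidSimplex_sum_le {t : ℝ} (ht0 : 0 < t) (ht1 : t ≤ 1) :
    {q | q ∈ solidSimplex ι ∧ ∑ i, q i ≤ t} = t • solidSimplex ι := by
  ext q
  simp only [Set.mem_smul_set_iff_inv_smul_mem₀ ht0.ne', solidSimplex, Set.mem_ofPred_eq,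
    Pi.smul_apply, smul_eq_mul, ← Finset.mul_sum, inv_mul_le_one₀ ht0,
    mul_nonneg_iff_of_pos_left (inv_pos.2 ht0)]
  exact ⟨fun ⟨⟨h0, _⟩, ht⟩ => ⟨h0, ht⟩, fun ⟨h0, ht⟩ => ⟨⟨h0, ht.trans ht1⟩, ht⟩⟩

theorem setOf_mem_solidSimplex_le_apply [DecidableEq ι] (i : ι) {t : ℝ} (ht0 : 0 ≤ t)
    (ht1 : t < 1) :
    {q | q ∈ solidSimplex ι ∧ t ≤ q i} = (Pi.single i t : ι → ℝ) +ᵥ (1 - t) • solidSimplex ι := by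
  have ht : 0 < 1 - t := by linarith
  ext q
  simp only [Set.mem_vadd_set_iff_neg_vadd_mem, Set.mem_smul_set_iff_inv_smul_mem₀ ht.ne',
    solidSimplex, Set.mem_ofPred_eq, Pi.smul_apply, smul_eq_mul, vadd_eq_add, Pi.add_apply,
    Pi.neg_apply, ← Finset.mul_sum, inv_mul_le_one₀ ht, mul_nonneg_iff_of_pos_left (inv_pos.2 ht),
    Finset.sum_add_distrib, Finset.sum_neg_distrib, Finset.sum_pi_single', Finset.mem_univ,
    if_true]
  constructor
  · rintro ⟨⟨h0, h1⟩, hi⟩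
    refine ⟨fun j => ?_, by linarith⟩
    rcases eq_or_ne j i with rfl | hj
    · simpa using hi
    · simpa [hj] using h0 j
  · rintro ⟨h0, h1⟩
    have hi : t ≤ q i := by simpa using h0 i
    refine ⟨⟨fun j => ?_, by linarith⟩, hi⟩
    rcases eq_or_ne j i with rfl | hj
    · linarith
    · simpa [hj] using h0 j

theorem volume_solidSimplex_ne_top : volume (solidSimplex ι) ≠ ⊤ := by
  have h : solidSimplex ι ⊆ Set.Icc 0 1 := fun q hq =>
    ⟨hq.1, fun i => (Finset.single_le_sum (fun j _ => hq.1 j) (Finset.mem_univ i)).trans hq.2⟩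
  exact ((Metric.isBounded_Icc (0 : ι → ℝ) 1).subset h).measure_lt_top.ne

theorem volume_solidSimplex_ne_zero : volume (solidSimplex ι) ≠ 0 := by
  set c : ℝ := ((Fintype.card ι : ℝ) + 1)⁻¹
  have h : Set.Icc 0 (fun _ => c) ⊆ solidSimplex ι := by
    refine fun q hq => ⟨hq.1, ?_⟩
    calc ∑ i, q i ≤ ∑ _i : ι, c := Finset.sum_le_sum fun i _ => hq.2 i
      _ ≤ 1 := by
        rw [Finset.sum_const, Finset.card_univ, nsmul_eq_mul, ← div_eq_mul_inv,
          div_le_one (by positivity)]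
        linarith
  have hbox : volume (Set.Icc 0 fun _ : ι => c) ≠ 0 := by
    rw [Real.volume_Icc_pi]
    refine Finset.prod_ne_zero_iff.2 fun i _ => ?_
    rw [Pi.zero_apply, sub_zero, Ne, ENNReal.ofReal_eq_zero, not_le]
    positivity
  exact fun h0 => hbox (measure_mono_null h h0)

theorem volume_smul_solidSimplex {t : ℝ} (ht : 0 ≤ t) :
    volume (t • solidSimplex ι) =
      ENNReal.ofReal (t ^ Fintype.card ι) * volume (solidSimplex ι) := by
  rw [Measure.addHaar_smul_of_nonneg volume ht, Module.finrank_fintype_fun_eq_card]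

end SolidSimplex

def simplexLaw {m : ℕ} (q : Fin m → ℝ) : Fin (m + 1) → ℝ := Fin.snoc q (1 - ∑ i, q i)

section SimplexLaw

variable {m : ℕ}

theorem simplexLaw_nonneg {q : Fin m → ℝ} (hq : q ∈ solidSimplex (Fin m)) (j : Fin (m + 1)) :
    0 ≤ simplexLaw q j := by
  induction j using Fin.lastCases with
  | last => simpa [simplexLaw] using hq.2
  | cast i => simpa [simplexLaw] using hq.1 i

theorem sum_simplexLaw (q : Fin m → ℝ) : ∑ j, simplexLaw q j = 1 := by
  simp [simplexLaw, Fin.sum_snoc]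

theorem volume_setOf_le_simplexLaw (j : Fin (m + 1)) {t : ℝ} (ht0 : 0 ≤ t) (ht1 : t < 1) :
    volume {q | q ∈ solidSimplex (Fin m) ∧ t ≤ simplexLaw q j} =
      ENNReal.ofReal ((1 - t) ^ m) * volume (solidSimplex (Fin m)) := by
  induction j using Fin.lastCases with
  | last =>
    have h : {q | q ∈ solidSimplex (Fin m) ∧ t ≤ simplexLaw q (Fin.last m)} =
        {q | q ∈ solidSimplex (Fin m) ∧ ∑ i, q i ≤ 1 - t} := by
      simp only [simplexLaw, Fin.snoc_last, le_sub_comm]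
    rw [h, setOf_mem_solidSimplex_sum_le (by linarith) (by linarith),
      volume_smul_solidSimplex (by linarith), Fintype.card_fin]
  | cast i =>
    simp only [simplexLaw, Fin.snoc_castSucc]
    rw [setOf_mem_solidSimplex_le_apply i ht0 ht1, measure_vadd,
      volume_smul_solidSimplex (by linarith), Fintype.card_fin]

theorem volume_iUnion_setOf_le_simplexLaw_le {t : ℝ} (ht0 : 0 ≤ t) (ht1 : t < 1) :
    volume (⋃ j, {q | q ∈ solidSimplex (Fin m) ∧ t ≤ simplexLaw q j}) ≤
      ENNReal.ofReal ((m + 1) * (1 - t) ^ m) * volume (solidSimplex (Fin m)) := by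
  refine (measure_iUnion_fintype_le _ _).trans_eq ?_
  simp only [volume_setOf_le_simplexLaw _ ht0 ht1, Finset.sum_const, Finset.card_univ,
    Fintype.card_fin, nsmul_eq_mul, ← mul_assoc]
  rw [ENNReal.ofReal_mul (by positivity)]
  norm_cast

theorem ofReal_one_sub_mul_volume_lt_of_forall_simplexLaw_lt {P : (Fin m → ℝ) → Prop} {ε t : ℝ}
    (hε : ε ≤ 1) (ht0 : 0 ≤ t) (ht1 : t < 1) (hbound : (m + 1) * (1 - t) ^ m < ε)
    (hP : ∀ q ∈ solidSimplex (Fin m), (∀ j, simplexLaw q j < t) → P q) :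
    ENNReal.ofReal (1 - ε) * volume (solidSimplex (Fin m)) <
      volume {q | q ∈ solidSimplex (Fin m) ∧ P q} := by
  refine ofReal_one_sub_mul_lt_of_subset_union hε volume_solidSimplex_ne_top (fun q hq => ?_)
    (fun q hq => hq.1) ((volume_iUnion_setOf_le_simplexLaw_le ht0 ht1).trans_lt ?_)
  · by_cases h : ∀ j, simplexLaw q j < t
    · exact Or.inl ⟨hq, hP q hq h⟩
    · obtain ⟨j, hj⟩ := not_forall.1 h
      exact Or.inr (Set.mem_iUnion.2 ⟨j, hq, not_lt.1 hj⟩)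
  · rw [ENNReal.mul_lt_mul_iff_left volume_solidSimplex_ne_zero volume_solidSimplex_ne_top,
      ENNReal.ofReal_lt_ofReal_iff_of_nonneg (by positivity)]
    exact hbound

end SimplexLaw

noncomputable def entropy {ι : Type*} [Fintype ι] (p : ι → ℝ) : ℝ := ∑ i, negMulLog (p i)

theorem neg_log_lt_entropy {ι : Type*} [Fintype ι] {p : ι → ℝ} {t : ℝ}
    (hp : ∀ i, 0 ≤ p i) (hsum : ∑ i, p i = 1) (hlt : ∀ i, p i < t) :
    -log t < entropy p := by
  have hterm {i : ι} (hi : 0 < p i) : p i * -log t < negMulLog (p i) := by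
    rw [negMulLog, neg_mul, ← mul_neg]
    exact mul_lt_mul_of_pos_left (neg_lt_neg (log_lt_log hi (hlt i))) hi
  obtain ⟨i, hi⟩ : ∃ i, 0 < p i := by
    by_contra! h
    linarith [Finset.sum_nonpos fun i (_ : i ∈ Finset.univ) => h i]
  calc -log t = ∑ i, p i * -log t := by rw [← Finset.sum_mul, hsum, one_mul]
    _ < entropy p := by
      refine Finset.sum_lt_sum (fun j _ => ?_) ⟨i, Finset.mem_univ i, hterm hi⟩
      rcases (hp j).eq_or_lt with h | h
      · simp [← h]
      · exact (hterm h).le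

theorem mul_log_two_lt_binEntropy {ε p : ℝ} (hε0 : 0 < ε) (hε : ε ≤ 3 / 8) (hp : ε / 3 < p)
    (hp' : p < 1 - ε / 3) : ε * log 2 < binEntropy p := by
  wlog hhalf : p ≤ 2⁻¹ generalizing p
  · rw [← binEntropy_one_sub]
    exact this (by linarith) (by linarith) (by linarith)
  have hmono : binEntropy (ε / 3) < binEntropy p :=
    binEntropy_strictMonoOn ⟨by positivity, by linarith⟩ ⟨by linarith, hhalf⟩ hp
  have hcorner : ε * log 2 ≤ negMulLog (ε / 3) := by
    have h8 : log 8 ≤ log (ε / 3)⁻¹ :=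
      log_le_log (by norm_num) (by rw [inv_div, le_div_iff₀ hε0]; linarith)
    rw [show (8 : ℝ) = 2 ^ 3 by norm_num, log_pow, log_inv] at h8
    rw [negMulLog]
    push_cast at h8
    nlinarith
  have hrest : 0 ≤ negMulLog (1 - ε / 3) := negMulLog_nonneg (by linarith) (by linarith)
  rw [binEntropy_eq_negMulLog_add_negMulLog_one_sub] at hmono
  linarith

theorem entropy_simplexLaw_fin_one (q : Fin 1 → ℝ) : entropy (simplexLaw q) = binEntropy (q 0) := by
  rw [entropy, Fin.sum_univ_castSucc, Fin.sum_univ_one,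
    binEntropy_eq_negMulLog_add_negMulLog_one_sub]
  simp only [simplexLaw, Fin.snoc_castSucc, Fin.snoc_last, Fin.sum_univ_one]

theorem one_sub_exp_neg_le_two_mul_div {x : ℝ} (hx : 0 ≤ x) :
    1 - exp (-x) ≤ 2 * x / (2 + x) := by
  have hderiv (t : ℝ) : HasDerivAt (fun t => exp t * (2 - t) - (2 + t))
      (exp t * (1 - t) - 1) t :=
    (((hasDerivAt_exp t).mul ((hasDerivAt_id' t).const_sub 2)).sub
      ((hasDerivAt_id' t).const_add 2)).congr_deriv (by ring)
  have hanti : Antitone (fun t => exp t * (2 - t) - (2 + t)) := by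
    refine antitone_of_deriv_nonpos (fun t => (hderiv t).differentiableAt) fun t => ?_
    rw [(hderiv t).deriv]
    have h := mul_le_mul_of_nonneg_left (one_sub_le_exp_neg t) (exp_pos t).le
    rw [← exp_add, add_neg_cancel, exp_zero] at h
    linarith
  have h := hanti hx
  simp only [exp_zero] at h
  rw [le_div_iff₀ (by linarith), exp_neg]
  have hexp := exp_pos x
  field_simp
  nlinarith [mul_inv_cancel₀ hexp.ne']

theorem two_mul_div_pow_div_le {x y : ℝ} (hx : 0 < x) (hxy : x ≤ y) (hy : y ≤ 2) (k : ℕ) :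
    (2 * x / (2 + x)) ^ (k + 2) / x ≤ (2 * y / (2 + y)) ^ (k + 2) / y := by
  have hform (z : ℝ) (hz : 0 < z) :
      (2 * z / (2 + z)) ^ (k + 2) / z = (2 * z / (2 + z)) ^ k * (4 * (z / (2 + z) ^ 2)) := by
    rw [pow_add]
    field_simp
    ring
  rw [hform x hx, hform y (hx.trans_le hxy)]
  have hbase : 2 * x / (2 + x) ≤ 2 * y / (2 + y) := by
    rw [div_le_div_iff₀ (by linarith) (by linarith)]; nlinarith
  have hquot : x / (2 + x) ^ 2 ≤ y / (2 + y) ^ 2 := by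
    rw [div_le_div_iff₀ (pow_pos (by linarith) 2) (pow_pos (by linarith) 2)]
    nlinarith [mul_nonneg (sub_nonneg.2 hxy) (show 0 ≤ 4 - x * y by nlinarith)]
  have h2x : 0 ≤ 2 * x / (2 + x) := div_nonneg (by linarith) (by linarith)
  have h2y : 0 ≤ 2 * y / (2 + y) := div_nonneg (by linarith) (by linarith)
  gcongr

theorem mul_one_sub_exp_pow_lt_of_log_le {n : ℕ} (hn : 3 ≤ n) {c L ε : ℝ} (hL : log n ≤ L)
    (hcL : c * L ≤ 2) (hε0 : 0 < ε) (hεc : ε ≤ c)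
    (hnum : n * (2 * (c * L) / (2 + c * L)) ^ (n - 1) < c) :
    n * (1 - exp (-(ε * log n))) ^ (n - 1) < ε := by
  obtain ⟨k, rfl⟩ : ∃ k, n = k + 3 := ⟨n - 3, by omega⟩
  rw [show k + 3 - 1 = k + 2 by omega] at hnum ⊢
  have hlog : 0 < log (k + 3 : ℕ) := log_pos (by norm_cast; omega)
  have hc : 0 < c := hε0.trans_le hεc
  have hL0 : 0 < L := hlog.trans_le hL
  set x := ε * log (k + 3 : ℕ)
  have hx : 0 < x := by positivity
  have hxy : x ≤ c * L := mul_le_mul hεc hL hlog.le hc.le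
  have hpade := two_mul_div_pow_div_le hx hxy hcL k
  rw [div_le_div_iff₀ hx (by positivity)] at hpade
  have hexp : 0 ≤ 1 - exp (-x) := by linarith [exp_le_one_iff.2 (neg_nonpos.2 hx.le)]
  calc ((k + 3 : ℕ) : ℝ) * (1 - exp (-x)) ^ (k + 2)
      ≤ (k + 3 : ℕ) * (2 * x / (2 + x)) ^ (k + 2) := by
        gcongr; exact one_sub_exp_neg_le_two_mul_div hx.le
    _ ≤ (k + 3 : ℕ) * (2 * (c * L) / (2 + c * L)) ^ (k + 2) * (x / (c * L)) := by
        rw [mul_assoc, mul_div_assoc']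
        gcongr
        rw [le_div_iff₀ (by positivity)]
        exact hpade
    _ < c * (x / (c * L)) := by gcongr
    _ ≤ ε := by
        rw [mul_div_assoc', mul_div_mul_left _ _ hc.ne', div_le_iff₀ hL0]
        exact mul_le_mul_of_nonneg_left hL hε0.le

theorem log_natCast_le_of_le_two_pow_mul_three_pow {n : ℕ} (a b : ℕ) (hn : 0 < n)
    (h : n ≤ 2 ^ a * 3 ^ b) : log n ≤ a * 0.6931471808 + b * 1.0986122888 := by
  calc log n ≤ log ((2 : ℝ) ^ a * 3 ^ b) := log_le_log (by positivity) (by exact_mod_cast h)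
    _ = a * log 2 + b * log 3 := by
        rw [log_mul (by positivity) (by positivity), log_pow, log_pow]
    _ ≤ a * 0.6931471808 + b * 1.0986122888 := by
        gcongr
        exacts [log_two_lt_d9.le, log_three_lt_d9.le]

theorem mul_one_sub_exp_pow_lt_of_le_eleven {n : ℕ} (hn : 3 ≤ n) (hn11 : n ≤ 11) {ε : ℝ}
    (hε0 : 0 < ε) (hε : ε ≤ 0.37) : n * (1 - exp (-(ε * log n))) ^ (n - 1) < ε := by
  have hcase (a b : ℕ) (hab : n ≤ 2 ^ a * 3 ^ b)
      (hcL : 0.37 * (a * 0.6931471808 + b * 1.0986122888) ≤ (2 : ℝ))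
      (hnum : n * (2 * (0.37 * (a * 0.6931471808 + b * 1.0986122888)) /
        (2 + 0.37 * (a * 0.6931471808 + b * 1.0986122888))) ^ (n - 1) < (0.37 : ℝ)) :
      n * (1 - exp (-(ε * log n))) ^ (n - 1) < ε :=
    mul_one_sub_exp_pow_lt_of_log_le hn
      (log_natCast_le_of_le_two_pow_mul_three_pow a b (by omega) hab) hcL hε0 hε hnum
  interval_cases n
  · exact hcase 0 1 (by norm_num) (by norm_num) (by norm_num)
  · exact hcase 2 0 (by norm_num) (by norm_num) (by norm_num)
  · exact hcase 1 1 (by norm_num) (by norm_num) (by norm_num)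
  · exact hcase 1 1 (by norm_num) (by norm_num) (by norm_num)
  · exact hcase 3 0 (by norm_num) (by norm_num) (by norm_num)
  · exact hcase 3 0 (by norm_num) (by norm_num) (by norm_num)
  · exact hcase 0 2 (by norm_num) (by norm_num) (by norm_num)
  · exact hcase 2 1 (by norm_num) (by norm_num) (by norm_num)
  · exact hcase 2 1 (by norm_num) (by norm_num) (by norm_num)

theorem cubic_le_exp_of_nonneg {x : ℝ} (hx : 0 ≤ x) :
    1 + x + x ^ 2 / 2 + x ^ 3 / 6 ≤ exp x := by
  have h := sum_le_exp_of_nonneg hx 4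
  norm_num [Finset.sum_range_succ, Nat.factorial] at h
  linarith

theorem mul_exp_lt_exp_sub_two_mul_exp {L : ℝ} (hL : 2.48 ≤ L) :
    L * exp L < exp ((exp L - 2) * exp (-(0.37 * L))) := by
  -- `log L ≤ L / e`
  have hL_le : L ≤ exp (0.368 * L) := by
    have h := add_one_le_exp (L / exp 1 - 1)
    rw [sub_add_cancel, exp_sub, div_le_div_iff_of_pos_right (exp_pos 1)] at h
    refine h.trans (exp_le_exp.2 ?_)
    rw [div_le_iff₀ (exp_pos 1)]
    nlinarith [exp_one_gt_d9]
  have hlhs : L * exp L ≤ exp (1.368 * L) := by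
    rw [show 1.368 * L = 0.368 * L + L by ring, exp_add]
    gcongr
  have hsmall : exp (-(0.37 * L)) ≤ 0.41 := by
    have h := cubic_le_exp_of_nonneg (show 0 ≤ 0.37 * L by linarith)
    rw [exp_neg, inv_le_comm₀ (exp_pos _) (by norm_num)]
    nlinarith
  have hbig : 1.368 * L + 0.82 < exp (0.63 * L) := by
    have h := cubic_le_exp_of_nonneg (show 0 ≤ 0.63 * L by linarith)
    nlinarith
  have hsplit : (exp L - 2) * exp (-(0.37 * L)) = exp (0.63 * L) - 2 * exp (-(0.37 * L)) := by
    rw [sub_mul, ← exp_add]; ring_nf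
  calc L * exp L ≤ exp (1.368 * L) := hlhs
    _ < exp ((exp L - 2) * exp (-(0.37 * L))) := by
        rw [exp_lt_exp, hsplit]; linarith

theorem mul_one_sub_exp_pow_lt_of_twelve_le {n : ℕ} (hn : 12 ≤ n) {ε : ℝ} (hε0 : 0 < ε)
    (hε : ε ≤ 0.37) : n * (1 - exp (-(ε * log n))) ^ (n - 1) < ε := by
  set L := log n
  have hL : 2.48 ≤ L := by
    have h12 : log 12 ≤ L := log_le_log (by norm_num) (by exact_mod_cast hn)
    rw [show (12 : ℝ) = 2 ^ 2 * 3 by norm_num, log_mul (by norm_num) (by norm_num),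
      log_pow] at h12
    push_cast at h12
    linarith [log_two_gt_d9, log_three_gt_d9]
  have hnL : (n : ℝ) = exp L := (exp_log (by positivity)).symm
  set a := exp (-(0.37 * L))
  have hu0 : 0 ≤ 1 - exp (-(ε * L)) := by
    linarith [exp_le_one_iff.2 (show -(ε * L) ≤ 0 by nlinarith)]
  have hu : 1 - exp (-(ε * L)) ≤ ε * L := by linarith [add_one_le_exp (-(ε * L))]
  have hua : 1 - exp (-(ε * L)) ≤ exp (-a) :=
    calc 1 - exp (-(ε * L)) ≤ 1 - a := sub_le_sub_left (exp_le_exp.2 (by nlinarith)) 1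
      _ ≤ exp (-a) := one_sub_le_exp_neg a
  obtain ⟨k, rfl⟩ : ∃ k, n = k + 2 := ⟨n - 2, by omega⟩
  have hk : (k : ℝ) = exp L - 2 := by push_cast at hnL; linarith
  have hkey := mul_exp_lt_exp_sub_two_mul_exp hL
  rw [← hk] at hkey
  calc ((k + 2 : ℕ) : ℝ) * (1 - exp (-(ε * L))) ^ (k + 2 - 1)
      = exp L * ((1 - exp (-(ε * L))) ^ k * (1 - exp (-(ε * L)))) := by
        rw [hnL, show k + 2 - 1 = k + 1 by omega, pow_succ]
    _ ≤ exp L * (exp (-a) ^ k * (ε * L)) := by gcongr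
    _ = ε * (L * exp L / exp (k * a)) := by
        rw [← exp_nat_mul, mul_neg, exp_neg]
        field_simp
    _ < ε := mul_lt_of_lt_one_right hε0 ((div_lt_one (exp_pos _)).2 hkey)

theorem natCast_mul_one_sub_rpow_neg_pow_lt {n : ℕ} (hn : 3 ≤ n) {ε : ℝ} (hε0 : 0 < ε)
    (hε : ε ≤ 0.37) : n * (1 - (n : ℝ) ^ (-ε)) ^ (n - 1) < ε := by
  rw [rpow_def_of_pos (by positivity), mul_neg, mul_comm (log _) ε]
  rcases le_or_gt n 11 with h | h
  · exact mul_one_sub_exp_pow_lt_of_le_eleven hn h hε0 hε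
  · exact mul_one_sub_exp_pow_lt_of_twelve_le h hε0 hε

theorem ofReal_one_sub_mul_volume_lt_volume_setOf_lt_entropy {m : ℕ} (hm : 1 ≤ m) {ε : ℝ}
    (hε0 : 0 < ε) (hε : ε ≤ 0.37) :
    ENNReal.ofReal (1 - ε) * volume (solidSimplex (Fin m)) <
      volume {q | q ∈ solidSimplex (Fin m) ∧ ε * log (m + 1) < entropy (simplexLaw q)} := by
  rcases hm.eq_or_lt with rfl | hm2
  · -- Here `2 (1 - 2 ^ (-ε)) > ε`, so instead both probabilities are bounded below.
    refine ofReal_one_sub_mul_volume_lt_of_forall_simplexLaw_lt (t := 1 - ε / 3) (by linarith)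
      (by linarith) (by linarith) (by norm_num; linarith) fun q _ hlt => ?_
    have h0 := hlt (Fin.castSucc 0)
    have h1 := hlt (Fin.last 1)
    simp only [simplexLaw, Fin.snoc_castSucc, Fin.snoc_last, Fin.sum_univ_one] at h0 h1
    rw [entropy_simplexLaw_fin_one, Nat.cast_one, one_add_one_eq_two]
    exact mul_log_two_lt_binEntropy hε0 (by linarith) (by linarith) h0
  · refine ofReal_one_sub_mul_volume_lt_of_forall_simplexLaw_lt (t := ((m : ℝ) + 1) ^ (-ε))
      (by linarith) (by positivity)
      (rpow_lt_one_of_one_lt_of_neg (by norm_cast; omega) (by linarith)) ?_ fun q hq hlt => ?_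
    · simpa using natCast_mul_one_sub_rpow_neg_pow_lt (n := m + 1) (by omega) hε0 hε
    · have h := neg_log_lt_entropy (simplexLaw_nonneg hq) (sum_simplexLaw q) hlt
      rwa [log_rpow (by positivity), neg_mul, neg_neg] at h

theorem negMulLog2_eq_negMulLog_div (x : ℝ) : negMulLog2 x = negMulLog x / log 2 := by
  rw [negMulLog2, negMulLog, logb]
  ring

end UniformSimplex

theorem stmt19 (r k m : ℕ) (hr : 2 ≤ r) (hk : 1 ≤ k) (hm : m + 1 = r ^ k)
    (ε : ℝ) (hε0 : 0 < ε) (hε1 : ε ≤ 1 / Real.exp 1) :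
    ENNReal.ofReal (1 - ε) *
        MeasureTheory.volume {q : Fin m → ℝ | (∀ i, 0 ≤ q i) ∧ ∑ i, q i ≤ 1} <
      MeasureTheory.volume {q : Fin m → ℝ | ((∀ i, 0 ≤ q i) ∧ ∑ i, q i ≤ 1) ∧
        ε * (k * Real.logb 2 r) <
          ∑ j : Fin (m + 1), negMulLog2 ((Fin.snoc q (1 - ∑ i, q i) : Fin (m + 1) → ℝ) j)} := by
  have hm1 : 1 ≤ m := by
    have := Nat.one_lt_pow (by omega : k ≠ 0) (by omega : 1 < r)
    omega
  have hε' : ε ≤ 0.37 :=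
    hε1.trans (by rw [div_le_iff₀ (exp_pos 1)]; nlinarith [exp_one_gt_d9])
  have hlog : (k : ℝ) * logb 2 r = log ((m : ℝ) + 1) / log 2 := by
    rw [logb, ← mul_div_assoc, ← log_pow]
    exact_mod_cast congrArg (fun n : ℕ => log n / log 2) hm.symm
  refine (UniformSimplex.ofReal_one_sub_mul_volume_lt_volume_setOf_lt_entropy hm1 hε0 hε').trans_le
    (measure_mono fun q ⟨hq, hH⟩ => ⟨hq, ?_⟩)
  simp only [hlog, UniformSimplex.negMulLog2_eq_negMulLog_div, ← Finset.sum_div, ← mul_div_assoc]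
  exact div_lt_div_of_pos_right hH (log_pos one_lt_two)
end
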